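/- Intervals in ℝ (Proposition 5.1): let λ > 0 be a real number and let a < b be real numbers. Then μ_λ([a, b]) = (b − a) + λ; in particular (b − a) + λ ≤ μ_λ([a, b]) ≤ (b − a) + λ, so μ_λ([a,b]) is comparable to length plus λ with absolute constants. -/

import Mathlib

/-!
The one-set cover `{[a, b]}` gives the upper bound. Conversely, Lebesgue measure on `ℝ` is
bounded by the diameter, so the sets of any countable cover of `[a, b]` have total diameter at
least `b - a`; in particular one of them has positive diameter and contributes `λ` on top.
-/

open MeasureTheory
open scoped ENNReal

/-- The mixed-gauge (method I) outer measure `μ_λ` on `ℝ` (the case `n = 1`), built from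
the gauge `h_λ(0) = 0`, `h_λ(r) = r + λ` for `r > 0`, applied to the extended diameter of
covering sets (so singletons and the empty set cost `0`). -/
noncomputable def mixedGaugeReal (lam : ℝ≥0∞) : OuterMeasure ℝ :=
  OuterMeasure.boundedBy fun s =>
    EMetric.diam s + (if EMetric.diam s = 0 then 0 else lam)

noncomputable def mixedGauge (lam : ℝ≥0∞) (s : Set ℝ) : ℝ≥0∞ :=
  Metric.ediam s + if Metric.ediam s = 0 then 0 else lam

theorem mixedGaugeReal_eq_boundedBy (lam : ℝ≥0∞) :
    mixedGaugeReal lam = OuterMeasure.boundedBy (mixedGauge lam) :=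
  rfl

theorem mixedGauge_of_ediam_ne_zero (lam : ℝ≥0∞) {s : Set ℝ} (hs : Metric.ediam s ≠ 0) :
    mixedGauge lam s = Metric.ediam s + lam := by
  rw [mixedGauge, if_neg hs]

theorem mixedGauge_empty (lam : ℝ≥0∞) : mixedGauge lam ∅ = 0 := by
  simp [mixedGauge]

theorem mixedGaugeReal_le_ediam_add (lam : ℝ≥0∞) {s : Set ℝ} (hs : Metric.ediam s ≠ 0) :
    mixedGaugeReal lam s ≤ Metric.ediam s + lam :=
  mixedGauge_of_ediam_ne_zero lam hs ▸ OuterMeasure.boundedBy_le s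

theorem volume_le_tsum_ediam {s : Set ℝ} {t : ℕ → Set ℝ} (hst : s ⊆ ⋃ i, t i) :
    volume s ≤ ∑' i, Metric.ediam (t i) :=
  calc volume s ≤ volume (⋃ i, t i) := measure_mono hst
    _ ≤ ∑' i, volume (t i) := measure_iUnion_le t
    _ ≤ ∑' i, Metric.ediam (t i) := ENNReal.tsum_le_tsum fun _ => Real.volume_le_diam _

/-- A cover of a set of positive length contains a set of positive diameter, which pays `λ`. -/
theorem volume_add_le_tsum_mixedGauge (lam : ℝ≥0∞) {s : Set ℝ} (hs : volume s ≠ 0)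
    {t : ℕ → Set ℝ} (hst : s ⊆ ⋃ i, t i) :
    volume s + lam ≤ ∑' i, mixedGauge lam (t i) := by
  have hdiam := volume_le_tsum_ediam hst
  obtain ⟨i, hi⟩ : ∃ i, Metric.ediam (t i) ≠ 0 := by
    by_contra! h
    simp only [h, tsum_zero, nonpos_iff_eq_zero] at hdiam
    exact hs hdiam
  have hlam : lam ≤ ∑' j, if Metric.ediam (t j) = 0 then 0 else lam :=
    calc lam = if Metric.ediam (t i) = 0 then 0 else lam := (if_neg hi).symm
      _ ≤ _ := ENNReal.le_tsum i
  calc volume s + lam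
      ≤ (∑' j, Metric.ediam (t j)) + ∑' j, if Metric.ediam (t j) = 0 then 0 else lam :=
        add_le_add hdiam hlam
    _ = ∑' j, mixedGauge lam (t j) := ENNReal.tsum_add.symm

theorem volume_add_le_mixedGaugeReal (lam : ℝ≥0∞) {s : Set ℝ} (hs : volume s ≠ 0) :
    volume s + lam ≤ mixedGaugeReal lam s := by
  rw [mixedGaugeReal_eq_boundedBy, OuterMeasure.boundedBy_eq_ofFunction (mixedGauge_empty lam),
    OuterMeasure.ofFunction_apply]
  exact le_iInf₂ fun t hst => volume_add_le_tsum_mixedGauge lam hs hst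

theorem mixedGaugeReal_Icc_general (lam : ℝ) (a b : ℝ) (hab : a < b) :
    mixedGaugeReal (ENNReal.ofReal lam) (Set.Icc a b)
      = ENNReal.ofReal (b - a) + ENNReal.ofReal lam := by
  have hlen : ENNReal.ofReal (b - a) ≠ 0 := by simpa using hab
  apply le_antisymm
  · rw [← Real.ediam_Icc a b] at hlen ⊢
    exact mixedGaugeReal_le_ediam_add _ hlen
  · rw [← Real.volume_Icc] at hlen ⊢
    exact volume_add_le_mixedGaugeReal _ hlen

/-- **Intervals in `ℝ`.** For real `λ > 0` and `a < b`,
`μ_λ([a, b]) = (b − a) + λ`. -/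
theorem mixedGaugeReal_Icc (lam : ℝ) (hlam : 0 < lam) (a b : ℝ) (hab : a < b) :
    mixedGaugeReal (ENNReal.ofReal lam) (Set.Icc a b)
      = ENNReal.ofReal (b - a) + ENNReal.ofReal lam :=
  mixedGaugeReal_Icc_general lam a b hab
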